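/- Let S be a decision rule system. Then h_EAR(S) ≥ β(S), where β(S) is the minimum cardinality of a node cover of the hypergraph G(S). -/

import Mathlib

/-! Formalization of decision rule systems and decision trees
(Durdymyradov & Moshkov, "Greedy Algorithm for Inference of Decision Trees
from Decision Rule Systems"). -/

/-- Values of attributes: `some δ` is a natural number value, `none` is the
special symbol `*` (interpreted as a value not occurring in the system). -/
abbrev Val := Option ℕ

/-- A decision rule `(a_{i₁}=δ₁) ∧ ⋯ ∧ (a_{iₘ}=δₘ) → σ`: the left-hand side
is a finite set of equations (attribute, value), the right-hand side a decision. -/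
structure Rule where
  lhs : Finset (ℕ × ℕ)
  rhs : ℕ
deriving DecidableEq

namespace Rule

/-- `A(r)`: the set of attributes of a rule. -/
def attrs (r : Rule) : Finset ℕ := r.lhs.image Prod.fst

/-- `K(r)`: the equation system of the left-hand side of a rule. -/
def K (r : Rule) : Finset (ℕ × Val) := r.lhs.image (fun p => (p.1, some p.2))

/-- the length of a rule -/
def len (r : Rule) : ℕ := r.lhs.card

/-- A rule is wellformed if the attributes in its left-hand side are pairwise
different, i.e. each attribute carries at most one equation. -/
def WF (r : Rule) : Prop := ∀ p ∈ r.lhs, ∀ q ∈ r.lhs, p.1 = q.1 → p = q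

end Rule

/-- `A(S)`: the set of attributes of a system of decision rules. -/
def attrsS (S : Finset Rule) : Finset ℕ := S.biUnion Rule.attrs

/-- `n(S) = |A(S)|`. -/
def nS (S : Finset Rule) : ℕ := (attrsS S).card

/-- `d(S)`: maximum length of a rule of `S`. -/
def dS (S : Finset Rule) : ℕ := S.sup Rule.len

/-- `V_S(a)`: the set of values δ such that the equation `a = δ` occurs in `S`. -/
def VS (S : Finset Rule) (a : ℕ) : Finset ℕ :=
  S.biUnion (fun r => (r.lhs.filter (fun p => p.1 = a)).image Prod.snd)

/-- `EV_S(a) = V_S(a) ∪ {*}`. -/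
def EVS (S : Finset Rule) (a : ℕ) : Finset Val := insert none ((VS S a).image some)

/-- `k(S) = max{|V_S(a)| : a ∈ A(S)}`. -/
def kS (S : Finset Rule) : ℕ := (attrsS S).sup (fun a => (VS S a).card)

/-- A (wellformed) decision rule system: a finite nonempty set of wellformed rules. -/
def SysWF (S : Finset Rule) : Prop := S.Nonempty ∧ ∀ r ∈ S, r.WF

/-- An equation system is consistent if it does not assign two different values
to the same attribute. -/
def Consistent (E : Finset (ℕ × Val)) : Prop :=
  ∀ p ∈ E, ∀ q ∈ E, p.1 = q.1 → p.2 = q.2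

instance : DecidablePred Consistent := fun E => by unfold Consistent; infer_instance

/-- `r_α`: the rule obtained from `r` by deleting from its left-hand side all
equations belonging to `α`. -/
def Rule.restrict (r : Rule) (α : Finset (ℕ × Val)) : Rule :=
  ⟨r.lhs.filter (fun p => ((p.1, (some p.2 : Val)) ∉ α)), r.rhs⟩

/-- `S_α`: the set of rules `r_α` for `r ∈ S` with `K(r) ∪ α` consistent. -/
def sysRestrict (S : Finset Rule) (α : Finset (ℕ × Val)) : Finset Rule :=
  (S.filter (fun r => Consistent (r.K ∪ α))).image (fun r => r.restrict α)

/-- Extended decision trees: terminal nodes are labeled with sets of rules, and a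
working node is labeled with an attribute and has one child for each value
(only the children corresponding to values in `EV_S(a)` are relevant). -/
inductive DT where
  | leaf (τ : Finset Rule) : DT
  | node (a : ℕ) (c : Val → DT) : DT

/-- `Γ` is an extended decision tree over `S`: working nodes are labeled with
attributes of `A(S)` (with edges labeled by the elements of `EV_S(a)`),
terminal nodes with subsets of `S`. -/
def DT.Over (S : Finset Rule) : DT → Prop
  | .leaf τ => τ ⊆ S
  | .node a c => a ∈ attrsS S ∧ ∀ v ∈ EVS S a, DT.Over S (c v)

/-- `h(Γ)`: the maximum number of working nodes in a complete path of `Γ`. -/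
def DT.depth (S : Finset Rule) : DT → ℕ
  | .leaf _ => 0
  | .node a c => 1 + (EVS S a).sup (fun v => DT.depth S (c v))

/-- The number of terminal nodes of `Γ`. -/
def DT.numLeaves (S : Finset Rule) : DT → ℕ
  | .leaf _ => 1
  | .node a c => ∑ v ∈ EVS S a, DT.numLeaves S (c v)

/-- `Γ` solves `EAR(S)` starting from the already accumulated equation system `E`:
for every complete path `ξ` with consistent `K(ξ)`, every rule of the terminal
label `τ(ξ)` satisfies `K(r) ⊆ K(ξ)`, and every other rule of `S` has
`K(r) ∪ K(ξ)` inconsistent. -/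
def DT.SolvesFrom (S : Finset Rule) : DT → Finset (ℕ × Val) → Prop
  | .leaf τ, E => Consistent E →
      (∀ r ∈ τ, r.K ⊆ E) ∧ ∀ r ∈ S, r ∉ τ → ¬ Consistent (r.K ∪ E)
  | .node a c, E => ∀ v ∈ EVS S a, DT.SolvesFrom S (c v) (insert (a, v) E)

/-- `Γ` is a decision tree over `S` solving the problem `EAR(S)`. -/
def DT.SolvesEAR (S : Finset Rule) (Γ : DT) : Prop := Γ.Over S ∧ Γ.SolvesFrom S ∅

/-- `h_EAR(S)`: the minimum depth of a decision tree over `S` solving `EAR(S)`. -/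
noncomputable def hEAR (S : Finset Rule) : ℕ :=
  sInf {n | ∃ Γ : DT, DT.SolvesEAR S Γ ∧ DT.depth S Γ = n}

/-- A node cover of the hypergraph `G(S)`. -/
def IsNodeCover (S : Finset Rule) (B : Finset ℕ) : Prop :=
  B ⊆ attrsS S ∧ ∀ r ∈ S, r.attrs.Nonempty → (r.attrs ∩ B).Nonempty

/-- `β(S)`: the minimum cardinality of a node cover of `G(S)`. -/
noncomputable def betaS (S : Finset Rule) : ℕ :=
  sInf {k | ∃ B : Finset ℕ, IsNodeCover S B ∧ B.card = k}

/-- `M` is a possible choice of `S^max`: a set of rules of `S` of length `d(S)`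
containing exactly one representative from each equivalence class
(`r₁ ∼ r₂ iff K(r₁) = K(r₂)`) of the set of rules of length `d(S)`, and
no other rules. -/
def IsMaxSet (S M : Finset Rule) : Prop :=
  (∀ r ∈ M, r ∈ S ∧ r.len = dS S) ∧
  (∀ r ∈ S, r.len = dS S → ∃ r' ∈ M, r'.K = r.K) ∧
  (∀ r₁ ∈ M, ∀ r₂ ∈ M, r₁.K = r₂.K → r₁ = r₂)

/-- `δ̄ ∈ EV(S)`, a tuple represented as a function on attributes. -/
def InEV (S : Finset Rule) (f : ℕ → Val) : Prop := ∀ a ∈ attrsS S, f a ∈ EVS S a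

/-- `K(S, δ̄)`. -/
def KofTuple (S : Finset Rule) (f : ℕ → Val) : Finset (ℕ × Val) :=
  (attrsS S).image (fun a => (a, f a))

/-- The rule `r` is realizable for the tuple `δ̄`, i.e. `K(r) ⊆ K(S, δ̄)`. -/
def Realizable (S : Finset Rule) (f : ℕ → Val) (r : Rule) : Prop :=
  r.K ⊆ KofTuple S f

instance (S : Finset Rule) (f : ℕ → Val) : DecidablePred (Realizable S f) :=
  fun r => by unfold Realizable; infer_instance

/-! The depth of a tree solving `EAR(S)` is at least the number of attributes queried along the
path on which every answer is `*`. At the end of that path the accumulated equations `a = *`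
are consistent, so every rule with a nonempty left-hand side must be ruled out there; since a
well-formed rule is itself consistent and no rule mentions `*`, the clash can only come from an
equation `a = δ` of the rule with `a` queried on the path. Hence the queried attributes form a
node cover of `G(S)`. -/

lemma Rule.mem_attrs_of_mem_K {r : Rule} {p : ℕ × Val} (hp : p ∈ r.K) : p.1 ∈ r.attrs := by
  obtain ⟨x, hx, rfl⟩ := Finset.mem_image.1 hp
  exact Finset.mem_image_of_mem _ hx

lemma Rule.attrs_subset_attrsS {S : Finset Rule} {r : Rule} (hr : r ∈ S) :
    r.attrs ⊆ attrsS S := fun _ ha => Finset.mem_biUnion.2 ⟨r, hr, ha⟩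

lemma Rule.WF.consistent_K {r : Rule} (h : r.WF) : Consistent r.K := by
  intro p hp q hq hpq
  obtain ⟨x, hx, rfl⟩ := Finset.mem_image.1 hp
  obtain ⟨y, hy, rfl⟩ := Finset.mem_image.1 hq
  rw [h x hx y hy hpq]

lemma none_mem_EVS (S : Finset Rule) (a : ℕ) : (none : Val) ∈ EVS S a :=
  Finset.mem_insert_self _ _

lemma exists_fst_eq_of_not_consistent_union {X Y : Finset (ℕ × Val)} (hX : Consistent X)
    (hY : Consistent Y) (hXY : ¬ Consistent (X ∪ Y)) : ∃ p ∈ X, ∃ q ∈ Y, p.1 = q.1 := by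
  simp only [Consistent, not_forall] at hXY
  obtain ⟨p, hp, q, hq, hpq, hne⟩ := hXY
  rcases Finset.mem_union.1 hp with hpX | hpY <;> rcases Finset.mem_union.1 hq with hqX | hqY
  · exact absurd (hX p hpX q hqX hpq) hne
  · exact ⟨p, hpX, q, hqY, hpq⟩
  · exact ⟨q, hqX, p, hpY, hpq.symm⟩
  · exact absurd (hY p hpY q hqY hpq) hne

def starEqs (B : Finset ℕ) : Finset (ℕ × Val) := B.image (fun a => (a, none))

lemma consistent_starEqs (B : Finset ℕ) : Consistent (starEqs B) := by
  intro p hp q hq _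
  obtain ⟨a, -, rfl⟩ := Finset.mem_image.1 hp
  obtain ⟨b, -, rfl⟩ := Finset.mem_image.1 hq
  rfl

lemma insert_starEqs (a : ℕ) (B : Finset ℕ) :
    insert (a, (none : Val)) (starEqs B) = starEqs (insert a B) :=
  (Finset.image_insert _ _ _).symm

lemma inter_starEqs_nonempty_of_leaf_solvesFrom {S : Finset Rule} {τ : Finset Rule}
    {B : Finset ℕ} (hΓ : (DT.leaf τ).SolvesFrom S (starEqs B)) {r : Rule} (hr : r ∈ S)
    (hWF : r.WF) (hne : r.attrs.Nonempty) : (r.attrs ∩ B).Nonempty := by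
  obtain ⟨hτ, hnotτ⟩ := hΓ (consistent_starEqs B)
  have hrτ : r ∉ τ := by
    intro hrτ
    obtain ⟨x, hx⟩ := Finset.image_nonempty.1 hne
    obtain ⟨a, -, ha⟩ := Finset.mem_image.1 (hτ r hrτ (Finset.mem_image_of_mem _ hx))
    simp only [Prod.mk.injEq, reduceCtorEq, and_false] at ha
  obtain ⟨p, hp, q, hq, hpq⟩ := exists_fst_eq_of_not_consistent_union hWF.consistent_K
    (consistent_starEqs B) (hnotτ r hr hrτ)
  obtain ⟨b, hb, rfl⟩ := Finset.mem_image.1 hq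
  have hbr : b ∈ r.attrs := by simpa only [hpq] using Rule.mem_attrs_of_mem_K hp
  exact ⟨b, Finset.mem_inter.2 ⟨hbr, hb⟩⟩

namespace DT

variable {S : Finset Rule}

def starAttrs : DT → Finset ℕ
  | .leaf _ => ∅
  | .node a c => insert a (starAttrs (c none))

lemma card_starAttrs_le_depth (S : Finset Rule) : ∀ Γ : DT, Γ.starAttrs.card ≤ Γ.depth S
  | .leaf _ => le_rfl
  | .node a c => by
    have hc := card_starAttrs_le_depth S (c none)
    have hsup := Finset.le_sup (f := fun v => (c v).depth S) (none_mem_EVS S a)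
    simp only [starAttrs, depth]
    have := Finset.card_insert_le a (c none).starAttrs
    omega

lemma Over.starAttrs_subset : ∀ {Γ : DT}, Γ.Over S → Γ.starAttrs ⊆ attrsS S
  | .leaf _, _ => Finset.empty_subset _
  | .node _ _, ⟨ha, hc⟩ =>
    Finset.insert_subset ha (Over.starAttrs_subset (hc none (none_mem_EVS S _)))

lemma SolvesFrom.exists_leaf_starAttrs :
    ∀ {Γ : DT} {B : Finset ℕ}, Γ.SolvesFrom S (starEqs B) →
      ∃ τ, (DT.leaf τ).SolvesFrom S (starEqs (B ∪ Γ.starAttrs))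
  | .leaf τ, B, hΓ => ⟨τ, by simpa only [starAttrs, Finset.union_empty] using hΓ⟩
  | .node a c, B, hΓ => by
    have hc := hΓ none (none_mem_EVS S a)
    rw [insert_starEqs] at hc
    simpa only [starAttrs, Finset.union_insert, Finset.insert_union] using
      SolvesFrom.exists_leaf_starAttrs hc

lemma SolvesEAR.isNodeCover_starAttrs {Γ : DT} (hS : ∀ r ∈ S, r.WF) (hΓ : Γ.SolvesEAR S) :
    IsNodeCover S Γ.starAttrs := by
  have hsolves : Γ.SolvesFrom S (starEqs ∅) := hΓ.2
  obtain ⟨τ, hτ⟩ := hsolves.exists_leaf_starAttrs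
  rw [Finset.empty_union] at hτ
  exact ⟨hΓ.1.starAttrs_subset, fun r hr hne =>
    inter_starEqs_nonempty_of_leaf_solvesFrom hτ hr (hS r hr) hne⟩

def queryAll (S : Finset Rule) : List ℕ → Finset (ℕ × Val) → DT
  | [], E => .leaf (S.filter (fun r => r.K ⊆ E))
  | a :: l, E => .node a (fun v => queryAll S l (insert (a, v) E))

lemma queryAll_over : ∀ {l : List ℕ} {E : Finset (ℕ × Val)},
    (∀ a ∈ l, a ∈ attrsS S) → (queryAll S l E).Over S
  | [], _, _ => Finset.filter_subset _ _
  | a :: _, _, hl => ⟨hl a List.mem_cons_self, fun _ _ =>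
      queryAll_over fun b hb => hl b (List.mem_cons_of_mem a hb)⟩

lemma queryAll_solvesFrom : ∀ {l : List ℕ} {E : Finset (ℕ × Val)},
    (∀ a ∈ attrsS S, a ∈ l ∨ ∃ v, (a, v) ∈ E) → (queryAll S l E).SolvesFrom S E
  | [], E, hl => by
    refine fun _ => ⟨fun r hr => (Finset.mem_filter.1 hr).2, fun r hr hrτ hcons => hrτ ?_⟩
    refine Finset.mem_filter.2 ⟨hr, fun p hp => ?_⟩
    have hpS : p.1 ∈ attrsS S := Rule.attrs_subset_attrsS hr (Rule.mem_attrs_of_mem_K hp)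
    obtain ⟨v, hv⟩ := (hl p.1 hpS).resolve_left List.not_mem_nil
    have hpv : p.2 = v := hcons p (Finset.mem_union_left _ hp) _ (Finset.mem_union_right _ hv) rfl
    rwa [← hpv] at hv
  | a :: l, E, hl => fun v _ => queryAll_solvesFrom fun b hb => by
    rcases hl b hb with hbl | ⟨w, hw⟩
    · rcases List.mem_cons.1 hbl with rfl | hbl
      · exact Or.inr ⟨v, Finset.mem_insert_self _ _⟩
      · exact Or.inl hbl
    · exact Or.inr ⟨w, Finset.mem_insert_of_mem hw⟩

lemma exists_solvesEAR (S : Finset Rule) : ∃ Γ : DT, Γ.SolvesEAR S :=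
  ⟨queryAll S (attrsS S).toList ∅, queryAll_over fun _ => Finset.mem_toList.1,
    queryAll_solvesFrom fun _ ha => Or.inl (Finset.mem_toList.2 ha)⟩

end DT

/-- Lemma 2: For any decision rule system `S`, `h_EAR(S) ≥ β(S)`, where `β(S)`
is the minimum cardinality of a node cover of the hypergraph `G(S)`. -/
theorem betaS_le_hEAR (S : Finset Rule) (hS : SysWF S) :
    betaS S ≤ hEAR S := by
  obtain ⟨Γ₀, hΓ₀⟩ := DT.exists_solvesEAR S
  refine le_csInf ⟨_, Γ₀, hΓ₀, rfl⟩ ?_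
  rintro _ ⟨Γ, hΓ, rfl⟩
  calc betaS S ≤ Γ.starAttrs.card := Nat.sInf_le ⟨_, hΓ.isNodeCover_starAttrs hS.2, rfl⟩
    _ ≤ Γ.depth S := DT.card_starAttrs_le_depth S Γ
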